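/- Let N ≥ 1 clients have output-layer updates U_1, …, U_N, each with E_j(U_k) ≠ 0 for at least one neuron j, and let λ_1, …, λ_N ∈ ℝ be nonzero per-client scaling factors. Then for every client k, TE(λ_k·U_k) = TE(U_k); consequently, for every classification boundary m ∈ ℝ, the set of clients labeled suspicious, {k : TE(λ_k·U_k) ≤ m}, equals {k : TE(U_k) ≤ m}, so DeepSight's Threshold-Exceedings-based classification of models as benign or suspicious cannot be manipulated by scaling the model updates. -/

import Mathlib

/-- Update Energy of output neuron `i`: absolute bias update plus sum of
absolute weight updates. -/
noncomputable def energy {P H : ℕ} (ub : Fin P → ℝ) (uw : Fin P → Fin H → ℝ)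
    (i : Fin P) : ℝ :=
  |ub i| + ∑ h : Fin H, |uw i h|

/-- Normalized Update Energy (NEUP) of output neuron `i`. -/
noncomputable def neup {P H : ℕ} (ub : Fin P → ℝ) (uw : Fin P → Fin H → ℝ)
    (i : Fin P) : ℝ :=
  (energy ub uw i) ^ 2 / ∑ j : Fin P, (energy ub uw j) ^ 2

/-- Maximal NEUP over all output neurons. -/
noncomputable def maxNeup {P H : ℕ} (ub : Fin P → ℝ) (uw : Fin P → Fin H → ℝ) : ℝ :=
  ⨆ i : Fin P, neup ub uw i

/-- Threshold ξ(U) = max(0.01, 1/P) · max_i C_i(U). -/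
noncomputable def threshold {P H : ℕ} (ub : Fin P → ℝ) (uw : Fin P → Fin H → ℝ) : ℝ :=
  max (0.01 : ℝ) (1 / (P : ℝ)) * maxNeup ub uw

open Classical in
/-- Number of Threshold Exceedings: neurons whose NEUP exceeds the threshold. -/
noncomputable def TE {P H : ℕ} (ub : Fin P → ℝ) (uw : Fin P → Fin H → ℝ) : ℕ :=
  (Finset.univ.filter (fun i : Fin P => threshold ub uw < neup ub uw i)).card

theorem energy_smul {P H : ℕ} (ub : Fin P → ℝ) (uw : Fin P → Fin H → ℝ) (l : ℝ) (i : Fin P) :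
    energy (fun j => l * ub j) (fun j h => l * uw j h) i = |l| * energy ub uw i := by
  simp only [energy, abs_mul, Finset.mul_sum, mul_add]

theorem neup_smul {P H : ℕ} (ub : Fin P → ℝ) (uw : Fin P → Fin H → ℝ) {l : ℝ} (hl : l ≠ 0) :
    neup (fun j => l * ub j) (fun j h => l * uw j h) = neup ub uw := by
  funext i
  simp only [neup, energy_smul, mul_pow, sq_abs, ← Finset.mul_sum]
  exact mul_div_mul_left _ _ (pow_ne_zero 2 hl)

theorem threshold_eq_of_neup_eq {P H H' : ℕ} {ub ub' : Fin P → ℝ} {uw : Fin P → Fin H → ℝ}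
    {uw' : Fin P → Fin H' → ℝ} (h : neup ub uw = neup ub' uw') :
    threshold ub uw = threshold ub' uw' := by
  simp only [threshold, maxNeup, h]

theorem TE_eq_of_neup_eq {P H H' : ℕ} {ub ub' : Fin P → ℝ} {uw : Fin P → Fin H → ℝ}
    {uw' : Fin P → Fin H' → ℝ} (h : neup ub uw = neup ub' uw') :
    TE ub uw = TE ub' uw' := by
  simp only [TE, threshold_eq_of_neup_eq h, h]

theorem TE_smul {P H : ℕ} (ub : Fin P → ℝ) (uw : Fin P → Fin H → ℝ) {l : ℝ} (hl : l ≠ 0) :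
    TE (fun j => l * ub j) (fun j h => l * uw j h) = TE ub uw :=
  TE_eq_of_neup_eq (neup_smul ub uw hl)

open Classical in
theorem TE_classification_scaling_invariant_general {N P H : ℕ}
    (ub : Fin N → Fin P → ℝ) (uw : Fin N → Fin P → Fin H → ℝ)
    (lam : Fin N → ℝ) (hlam : ∀ k : Fin N, lam k ≠ 0) :
    (∀ k : Fin N,
        TE (fun j => lam k * ub k j) (fun j h => lam k * uw k j h) = TE (ub k) (uw k)) ∧
      ∀ m : ℝ,
        (Finset.univ.filter (fun k : Fin N =>
            ((TE (fun j => lam k * ub k j) (fun j h => lam k * uw k j h) : ℝ) ≤ m)))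
          = (Finset.univ.filter (fun k : Fin N => ((TE (ub k) (uw k) : ℝ) ≤ m))) := by
  have hTE k := TE_smul (ub k) (uw k) (hlam k)
  exact ⟨hTE, fun m => Finset.filter_congr fun k _ => by rw [hTE k]⟩

open Classical in
/-- for N clients with per-client nonzero scaling factors, the
Threshold Exceedings of each client's update are invariant under scaling;
consequently, for every classification boundary m, the set of clients labeled
suspicious is unchanged by scaling. -/
theorem TE_classification_scaling_invariant {N P H : ℕ} (hN : 1 ≤ N) (hP : 1 ≤ P)
    (ub : Fin N → Fin P → ℝ) (uw : Fin N → Fin P → Fin H → ℝ)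
    (hE : ∀ k : Fin N, ∃ j : Fin P, energy (ub k) (uw k) j ≠ 0)
    (lam : Fin N → ℝ) (hlam : ∀ k : Fin N, lam k ≠ 0) :
    (∀ k : Fin N,
        TE (fun j => lam k * ub k j) (fun j h => lam k * uw k j h) = TE (ub k) (uw k)) ∧
      ∀ m : ℝ,
        (Finset.univ.filter (fun k : Fin N =>
            ((TE (fun j => lam k * ub k j) (fun j h => lam k * uw k j h) : ℝ) ≤ m)))
          = (Finset.univ.filter (fun k : Fin N => ((TE (ub k) (uw k) : ℝ) ≤ m))) :=
  TE_classification_scaling_invariant_general ub uw lam hlam
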